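/- arXiv:2211.13934 — 3 statements merged into one kernel-verified Lean document; each statement's English description precedes it below -/
import Mathlib

section
/- Let d ≥ 1, ε > 0, 0 < p0 ≤ 1, and p, q ∈ [p0, ∞] with q ≤ p ≤ 1. Let Λ, Π ⊆ ℝ^d be relatively separated, let A ∈ C^{p0}(Λ, Π), and set K := max_x Φ^ε(x)^{−p}. Assume ‖c‖_p ≤ ‖Ac‖_p for all c ∈ ℓ^p(Π). Then for every k ∈ ℤ^d and every c ∈ ℓ^p(Π): ‖φ^ε_k c‖_p^q ≤ ‖φ^ε_k Ac‖_p^q + K^{q/p} ∑_{j∈ℤ^d} (V^{ε,p}_{j,k})^{q/p} ‖φ^ε_j c‖_p^q. -/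
open scoped ENNReal NNReal
open MeasureTheory Metric

attribute [local instance] Classical.propDecidable

noncomputable section

abbrev Ed (d : ℕ) : Type := EuclideanSpace ℝ (Fin d)
abbrev Zd (d : ℕ) : Type := Fin d → ℤ

def zc {d : ℕ} (k : Zd d) : Ed d := WithLp.toLp 2 (fun i => (k i : ℝ))

def lpNorm {ι : Type*} (p : ℝ≥0∞) (c : ι → ℂ) : ℝ :=
  if p = ∞ then ⨆ i, ‖c i‖ else (∑' i, ‖c i‖ ^ p.toReal) ^ (1 / p.toReal)

def elp {ι : Type*} (p : ℝ) (c : ι → ℂ) : ℝ≥0∞ :=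
  (∑' i, (‖c i‖₊ : ℝ≥0∞) ^ p) ^ (1 / p)

def matMul {ι κ : Type*} (a : ι → κ → ℂ) (c : κ → ℂ) : ι → ℂ :=
  fun i => ∑' j, a i j * c j

def MatBoundedOn {ι κ : Type*} (a : ι → κ → ℂ) (p : ℝ≥0∞) : Prop :=
  (∀ c : κ → ℂ, Memℓp c p → (∀ i, Summable fun j => a i j * c j) ∧ Memℓp (matMul a c) p) ∧
  ∃ C > (0:ℝ), ∀ c : κ → ℂ, Memℓp c p → lpNorm p (matMul a c) ≤ C * lpNorm p c

def MatInvertibleOn {ι κ : Type*} (a : ι → κ → ℂ) (p : ℝ≥0∞) : Prop :=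
  MatBoundedOn a p ∧
  (∀ c c' : κ → ℂ, Memℓp c p → Memℓp c' p → matMul a c = matMul a c' → c = c') ∧
  (∀ u : ι → ℂ, Memℓp u p → ∃ c : κ → ℂ, Memℓp c p ∧ matMul a c = u) ∧
  ∃ C > (0:ℝ), ∀ c : κ → ℂ, Memℓp c p → lpNorm p c ≤ C * lpNorm p (matMul a c)

def RelSep {d : ℕ} (Λ : Set (Ed d)) : Prop :=
  (∀ x : Ed d, (Λ ∩ ball x 1).Finite) ∧ ∃ N : ℕ, ∀ x : Ed d, (Λ ∩ ball x 1).ncard ≤ N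

def amalg {d : ℕ} (H : Ed d → ℝ) (x : Ed d) : ℝ :=
  ⨆ y : (closedBall x 1), |H (y : Ed d)|

def MemWiener {d : ℕ} (p : ℝ) (H : Ed d → ℝ) : Prop :=
  Continuous H ∧ (∃ M : ℝ, ∀ x, |H x| ≤ M) ∧ Integrable (fun x => amalg H x ^ p)

def wienerNorm {d : ℕ} (p : ℝ) (H : Ed d → ℝ) : ℝ :=
  (∫ x, amalg H x ^ p) ^ (1 / p)

def phiAct {d : ℕ} {Γ : Set (Ed d)} (φ : Ed d → ℝ) (ε : ℝ) (k : Zd d) (a : Γ → ℂ) : Γ → ℂ :=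
  fun r => (φ (ε • (r : Ed d) - zc k)) • a r

def Phi {d : ℕ} (φ : Ed d → ℝ) (ε : ℝ) (x : Ed d) : ℝ :=
  ∑' k : Zd d, (φ (ε • x - zc k)) ^ 2

def commM {d : ℕ} {Λ Γ : Set (Ed d)} (a : Λ → Γ → ℂ) (φ : Ed d → ℝ) (ε : ℝ) (k j : Zd d) :
    Λ → Γ → ℂ :=
  fun l r => a l r * (((φ (ε • (r : Ed d) - zc k) - φ (ε • (l : Ed d) - zc k)) : ℝ) : ℂ)
      * ((φ (ε • (r : Ed d) - zc j) : ℝ) : ℂ)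

def schurSP {ι κ : Type*} (p : ℝ) (a : ι → κ → ℂ) : ℝ≥0∞ :=
  ⨆ j : κ, ∑' i : ι, (‖a i j‖₊ : ℝ≥0∞) ^ p

def schurE {ι κ : Type*} (a : ι → κ → ℂ) : ℝ≥0∞ :=
  (⨆ j : κ, ∑' i : ι, (‖a i j‖₊ : ℝ≥0∞)) + (⨆ i : ι, ∑' j : κ, (‖a i j‖₊ : ℝ≥0∞))

def cubeSup {d : ℕ} (H : Ed d → ℝ) (q : ℝ) (t : Zd d) : ℝ :=
  ⨆ z : {z : Ed d // ∀ i, (t i : ℝ) ≤ z i ∧ z i ≤ (t i : ℝ) + 1}, |H (z : Ed d)| ^ q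

def DeltaE {d : ℕ} (H : Ed d → ℝ) (ε q : ℝ) (s : Zd d) : ℝ≥0∞ :=
  ∑' t : Zd d, if (∀ i, |ε * (t i : ℝ) - (s i : ℝ)| ≤ 5) then ENNReal.ofReal (cubeSup H q t) else 0

private lemma finsum_le_rpow {ι : Type*} (s : Finset ι) (f : ι → ℝ≥0∞) {t : ℝ}
    (h0 : 0 < t) (h1 : t ≤ 1) :
    ∑ i ∈ s, f i ≤ (∑ i ∈ s, f i ^ t) ^ (1 / t) := by
  classical
  induction s using Finset.cons_induction with
  | empty => simp only [Finset.sum_empty]; exact zero_le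
  | cons a s ha ih =>
    rw [Finset.sum_cons, Finset.sum_cons]
    have h3 : (((∑ i ∈ s, f i ^ t) ^ (1 / t)) ^ t) = ∑ i ∈ s, f i ^ t := by
      rw [← ENNReal.rpow_mul, one_div, inv_mul_cancel₀ h0.ne', ENNReal.rpow_one]
    have h2 : f a + (∑ i ∈ s, f i ^ t) ^ (1 / t)
        ≤ (f a ^ t + (((∑ i ∈ s, f i ^ t) ^ (1 / t)) ^ t)) ^ (1 / t) := by
      have := ENNReal.rpow_add_rpow_le (f a) ((∑ i ∈ s, f i ^ t) ^ (1 / t)) h0 h1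
      simpa using this
    rw [h3] at h2
    exact le_trans (add_le_add_right ih _) h2

private lemma tsum_rpow_le {ι : Type*} (f : ι → ℝ≥0∞) {t : ℝ} (h0 : 0 < t) (h1 : t ≤ 1) :
    (∑' i, f i) ^ t ≤ ∑' i, f i ^ t := by
  have key : ∑' i, f i ≤ (∑' i, f i ^ t) ^ (1 / t) := by
    rw [ENNReal.tsum_eq_iSup_sum]
    refine iSup_le fun s => (finsum_le_rpow s f h0 h1).trans ?_
    exact ENNReal.rpow_le_rpow (ENNReal.sum_le_tsum s) (by positivity)
  calc (∑' i, f i) ^ t ≤ ((∑' i, f i ^ t) ^ (1 / t)) ^ t :=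
        ENNReal.rpow_le_rpow key h0.le
    _ = ∑' i, f i ^ t := by
        rw [← ENNReal.rpow_mul, one_div, inv_mul_cancel₀ h0.ne', ENNReal.rpow_one]

private lemma enorm_tsum_le' {ι : Type*} (f : ι → ℂ) :
    (‖∑' i, f i‖₊ : ℝ≥0∞) ≤ ∑' i, (‖f i‖₊ : ℝ≥0∞) := by
  by_cases h : Summable fun i => ‖f i‖₊
  · rw [← ENNReal.coe_tsum h]
    exact_mod_cast nnnorm_tsum_le h
  · have htop : (∑' i, (‖f i‖₊ : ℝ≥0∞)) = ∞ := by
      by_contra hne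
      exact h (ENNReal.tsum_coe_ne_top_iff_summable.mp hne)
    rw [htop]; exact le_top

private lemma elp_pow {ι : Type*} (v : ι → ℂ) {p q : ℝ} :
    elp p v ^ q = (∑' i, (‖v i‖₊ : ℝ≥0∞) ^ p) ^ (q / p) := by
  rw [elp, ← ENNReal.rpow_mul, one_div_mul_eq_div]

theorem stmt10 (d : ℕ) (hd : 1 ≤ d) (ε : ℝ) (hε : 0 < ε)
    (p₀ p q : ℝ) (h00 : 0 < p₀) (h01 : p₀ ≤ 1) (hq0 : p₀ ≤ q) (hqp : q ≤ p) (hp1 : p ≤ 1)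
    (φ : Ed d → ℝ)
    (hφsm : ContDiff ℝ (⊤ : ℕ∞) φ) (hφ0 : ∀ x, 0 ≤ φ x) (hφ1 : ∀ x, φ x ≤ 1)
    (hφsupp : ∀ x : Ed d, 2 ≤ ‖x‖ → φ x = 0)
    (hφpart : ∀ x : Ed d, HasSum (fun k : Zd d => φ (x - zc k)) 1)
    (Λ Γ : Set (Ed d)) (hΛ : RelSep Λ) (hΓ : RelSep Γ)
    (a : Λ → Γ → ℂ) (H : Ed d → ℝ) (hH : MemWiener p₀ H)
    (henv : ∀ (l : Λ) (r : Γ), ‖a l r‖ ≤ H ((l : Ed d) - (r : Ed d)))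
    (K : ℝ) (hK : ∀ x : Ed d, (Phi φ ε x) ^ (-p) ≤ K)
    (hlow : ∀ c : Γ → ℂ, Summable (fun r => ‖c r‖ ^ p) → elp p c ≤ elp p (matMul a c)) :
    ∀ (k : Zd d) (c : Γ → ℂ), Summable (fun r => ‖c r‖ ^ p) →
      elp p (phiAct φ ε k c) ^ q ≤
        elp p (phiAct φ ε k (matMul a c)) ^ q +
        ENNReal.ofReal K ^ (q/p) *
          ∑' j : Zd d, schurSP p (commM a φ ε k j) ^ (q/p) * elp p (phiAct φ ε j c) ^ q := by
  intro k c hc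
  classical
  have hp0 : 0 < p := h00.trans_le (hq0.trans hqp)
  have hq0' : 0 < q := h00.trans_le hq0
  have hθ0 : 0 < q / p := div_pos hq0' hp0
  have hθ1 : q / p ≤ 1 := (div_le_one hp0).mpr hqp
  obtain ⟨hHc, ⟨M, hM⟩, hHint⟩ := hH
  -- c is absolutely summable
  have hc1 : Summable fun r : Γ => ‖c r‖ := by
    set T := ∑' r : Γ, ‖c r‖ ^ p with hT
    set B := max (T ^ (1 / p)) 1 with hB
    have hB0 : (0:ℝ) ≤ B := le_trans zero_le_one (le_max_right _ _)
    have hcr : ∀ r : Γ, ‖c r‖ ≤ B := by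
      intro r
      have h1 : ‖c r‖ ^ p ≤ T := Summable.le_tsum hc r fun j _ => by positivity
      have h2 : (‖c r‖ ^ p) ^ (1 / p) ≤ T ^ (1 / p) := by
        apply Real.rpow_le_rpow (by positivity) h1 (by positivity)
      have h3 : (‖c r‖ ^ p) ^ (1 / p) = ‖c r‖ := by
        rw [← Real.rpow_mul (norm_nonneg _), mul_one_div_cancel hp0.ne', Real.rpow_one]
      exact le_trans (h3 ▸ h2) (le_max_left _ _)
    refine Summable.of_nonneg_of_le (fun r => norm_nonneg _) (fun r => ?_) (hc.mul_left (B ^ (1 - p)))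
    have h4 : ‖c r‖ ^ (1 - p) ≤ B ^ (1 - p) :=
      Real.rpow_le_rpow (norm_nonneg _) (hcr r) (by linarith)
    have h5 : ‖c r‖ = ‖c r‖ ^ p * ‖c r‖ ^ (1 - p) := by
      rw [← Real.rpow_add' (norm_nonneg _) (by norm_num)]
      norm_num
    calc ‖c r‖ = ‖c r‖ ^ p * ‖c r‖ ^ (1 - p) := h5
      _ ≤ ‖c r‖ ^ p * B ^ (1 - p) := by
          apply mul_le_mul_of_nonneg_left h4 (by positivity)
      _ = B ^ (1 - p) * ‖c r‖ ^ p := by ring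
  -- row-wise absolute summability of the matrix action
  have hS1 : ∀ l : Λ, Summable fun r : Γ => ‖a l r * c r‖ := by
    intro l
    refine Summable.of_nonneg_of_le (fun r => norm_nonneg _) (fun r => ?_) (hc1.mul_left M)
    rw [norm_mul]
    exact mul_le_mul_of_nonneg_right
      ((henv l r).trans ((le_abs_self _).trans (hM _))) (norm_nonneg _)
  have hS1' : ∀ l : Λ, Summable fun r : Γ => a l r * c r := fun l => (hS1 l).of_norm
  -- the commutator entries
  set dm : Λ → Γ → ℂ := fun l r =>
    a l r * (((φ (ε • (r : Ed d) - zc k) - φ (ε • (l : Ed d) - zc k)) : ℝ) : ℂ) with hdm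
  have hS2 : ∀ l : Λ, Summable fun r : Γ => ‖dm l r * c r‖ := by
    intro l
    refine Summable.of_nonneg_of_le (fun r => norm_nonneg _) (fun r => ?_) ((hS1 l).mul_left 2)
    have hb : ‖(((φ (ε • (r : Ed d) - zc k) - φ (ε • (l : Ed d) - zc k)) : ℝ) : ℂ)‖ ≤ 2 := by
      rw [Complex.norm_real, Real.norm_eq_abs]
      have h1 := hφ0 (ε • (r : Ed d) - zc k); have h2 := hφ1 (ε • (r : Ed d) - zc k)
      have h3 := hφ0 (ε • (l : Ed d) - zc k); have h4 := hφ1 (ε • (l : Ed d) - zc k)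
      rw [abs_le]; constructor <;> linarith
    calc ‖dm l r * c r‖
        = ‖a l r‖ * ‖(((φ (ε • (r : Ed d) - zc k) - φ (ε • (l : Ed d) - zc k)) : ℝ) : ℂ)‖ * ‖c r‖ := by
          rw [hdm]; rw [norm_mul, norm_mul]
      _ ≤ ‖a l r‖ * 2 * ‖c r‖ := by
          apply mul_le_mul_of_nonneg_right _ (norm_nonneg _)
          exact mul_le_mul_of_nonneg_left hb (norm_nonneg _)
      _ = 2 * ‖a l r * c r‖ := by rw [norm_mul]; ring
  set Dl : Λ → ℂ := fun l => ∑' r : Γ, dm l r * c r with hDl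
  -- decomposition of the matrix action on the localized sequence
  have hdecomp : ∀ l : Λ,
      matMul a (phiAct φ ε k c) l = phiAct φ ε k (matMul a c) l + Dl l := by
    intro l
    have hsum1 : Summable fun r : Γ =>
        ((φ (ε • (l : Ed d) - zc k) : ℝ) : ℂ) * (a l r * c r) := (hS1' l).mul_left _
    have hsum2 : Summable fun r : Γ => dm l r * c r := (hS2 l).of_norm
    have hpt : ∀ r : Γ, a l r * phiAct φ ε k c r
        = ((φ (ε • (l : Ed d) - zc k) : ℝ) : ℂ) * (a l r * c r) + dm l r * c r := by
      intro r
      simp only [phiAct, hdm, Complex.real_smul, Complex.ofReal_sub]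
      ring
    calc matMul a (phiAct φ ε k c) l
        = ∑' r : Γ, (((φ (ε • (l : Ed d) - zc k) : ℝ) : ℂ) * (a l r * c r) + dm l r * c r) :=
          tsum_congr hpt
      _ = (∑' r : Γ, ((φ (ε • (l : Ed d) - zc k) : ℝ) : ℂ) * (a l r * c r))
            + ∑' r : Γ, dm l r * c r := Summable.tsum_add hsum1 hsum2
      _ = phiAct φ ε k (matMul a c) l + Dl l := by
          rw [tsum_mul_left]
          simp only [phiAct, matMul, Complex.real_smul, hDl]
  -- lower bound transferred to the p-sums
  have hlowN : (∑' r : Γ, (‖phiAct φ ε k c r‖₊ : ℝ≥0∞) ^ p)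
      ≤ ∑' l : Λ, (‖matMul a (phiAct φ ε k c) l‖₊ : ℝ≥0∞) ^ p := by
    have hsummu : Summable fun r : Γ => ‖phiAct φ ε k c r‖ ^ p := by
      refine Summable.of_nonneg_of_le (fun r => by positivity) (fun r => ?_) hc
      refine Real.rpow_le_rpow (norm_nonneg _) ?_ hp0.le
      simp only [phiAct, norm_smul, Real.norm_eq_abs]
      rw [abs_of_nonneg (hφ0 _)]
      exact mul_le_of_le_one_left (norm_nonneg _) (hφ1 _)
    have h2 := ENNReal.rpow_le_rpow (hlow _ hsummu) hp0.le
    rwa [elp, elp, ← ENNReal.rpow_mul, ← ENNReal.rpow_mul, one_div,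
      inv_mul_cancel₀ hp0.ne', ENNReal.rpow_one, ENNReal.rpow_one] at h2
  -- split off the commutator part
  have hsplit : (∑' l : Λ, (‖matMul a (phiAct φ ε k c) l‖₊ : ℝ≥0∞) ^ p)
      ≤ (∑' l : Λ, (‖phiAct φ ε k (matMul a c) l‖₊ : ℝ≥0∞) ^ p)
        + ∑' l : Λ, (‖Dl l‖₊ : ℝ≥0∞) ^ p := by
    rw [← ENNReal.tsum_add]
    refine ENNReal.tsum_le_tsum fun l => ?_
    rw [hdecomp l]
    calc (‖phiAct φ ε k (matMul a c) l + Dl l‖₊ : ℝ≥0∞) ^ p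
        ≤ ((‖phiAct φ ε k (matMul a c) l‖₊ : ℝ≥0∞) + (‖Dl l‖₊ : ℝ≥0∞)) ^ p := by
          apply ENNReal.rpow_le_rpow _ hp0.le
          exact_mod_cast nnnorm_add_le _ _
      _ ≤ _ := ENNReal.rpow_add_le_add_rpow _ _ hp0.le hp1
  -- properties of the partition of unity
  have hsumφ2 : ∀ x : Ed d, Summable fun j : Zd d => φ (x - zc j) ^ 2 := by
    intro x
    refine Summable.of_nonneg_of_le (fun j => sq_nonneg _) (fun j => ?_) (hφpart x).summable
    rw [sq]
    exact mul_le_of_le_one_left (hφ0 _) (hφ1 _)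
  have hPpos : ∀ x : Ed d, 0 < Phi φ ε x := by
    intro x
    obtain ⟨k0, hk0⟩ : ∃ k0 : Zd d, 0 < φ (ε • x - zc k0) := by
      by_contra hcon
      push_neg at hcon
      have hz : (fun j : Zd d => φ (ε • x - zc j)) = fun _ => 0 :=
        funext fun j => le_antisymm (hcon j) (hφ0 _)
      have h1 := hφpart (ε • x)
      rw [hz] at h1
      simpa using h1.unique hasSum_zero
    have h2 : φ (ε • x - zc k0) ^ 2 ≤ ∑' j : Zd d, φ (ε • x - zc j) ^ 2 :=
      Summable.le_tsum (hsumφ2 (ε • x)) k0 fun j _ => sq_nonneg _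
    rw [Phi]
    exact lt_of_lt_of_le (by positivity) h2
  have hPsum : ∀ x : Ed d,
      (∑' j : Zd d, ENNReal.ofReal (φ (ε • x - zc j) ^ 2)) = ENNReal.ofReal (Phi φ ε x) := by
    intro x
    rw [Phi, ENNReal.ofReal_tsum_of_nonneg (fun j => sq_nonneg _) (hsumφ2 (ε • x))]
  set W : Γ → ℝ≥0∞ := fun r =>
    (ENNReal.ofReal (Phi φ ε (r : Ed d)))⁻¹ * (‖c r‖₊ : ℝ≥0∞) with hW
  -- step 1 : pointwise bound on the commutator term
  have hstep1 : ∀ l : Λ, (‖Dl l‖₊ : ℝ≥0∞)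
      ≤ ∑' j : Zd d, ∑' r : Γ, (‖commM a φ ε k j l r‖₊ : ℝ≥0∞)
          * (ENNReal.ofReal (φ (ε • (r : Ed d) - zc j)) * W r) := by
    intro l
    have h2 : ∀ r : Γ, (‖dm l r * c r‖₊ : ℝ≥0∞)
        = ∑' j : Zd d, (‖commM a φ ε k j l r‖₊ : ℝ≥0∞)
            * (ENNReal.ofReal (φ (ε • (r : Ed d) - zc j)) * W r) := by
      intro r
      have hP0 : ENNReal.ofReal (Phi φ ε (r : Ed d)) ≠ 0 :=
        (ENNReal.ofReal_pos.mpr (hPpos _)).ne'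
      have hcomm : ∀ j : Zd d, (‖commM a φ ε k j l r‖₊ : ℝ≥0∞)
          = (‖dm l r‖₊ : ℝ≥0∞) * ENNReal.ofReal (φ (ε • (r : Ed d) - zc j)) := by
        intro j
        have he : commM a φ ε k j l r = dm l r * ((φ (ε • (r : Ed d) - zc j) : ℝ) : ℂ) := rfl
        rw [he, nnnorm_mul, ENNReal.coe_mul, Complex.nnnorm_real,
          ← enorm_eq_nnnorm (φ (ε • (r : Ed d) - zc j)), Real.enorm_eq_ofReal (hφ0 _)]
      calc (‖dm l r * c r‖₊ : ℝ≥0∞)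
          = (‖dm l r‖₊ : ℝ≥0∞) * (‖c r‖₊ : ℝ≥0∞) := by rw [nnnorm_mul, ENNReal.coe_mul]
        _ = (‖dm l r‖₊ : ℝ≥0∞) * (ENNReal.ofReal (Phi φ ε (r : Ed d)) * W r) := by
            rw [hW, ← mul_assoc (ENNReal.ofReal (Phi φ ε (r : Ed d))), ENNReal.mul_inv_cancel hP0 ENNReal.ofReal_ne_top, one_mul]
        _ = (‖dm l r‖₊ : ℝ≥0∞)
              * ((∑' j : Zd d, ENNReal.ofReal (φ (ε • (r : Ed d) - zc j) ^ 2)) * W r) := by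
            rw [hPsum]
        _ = ∑' j : Zd d, (‖dm l r‖₊ : ℝ≥0∞)
              * (ENNReal.ofReal (φ (ε • (r : Ed d) - zc j) ^ 2) * W r) := by
            rw [← ENNReal.tsum_mul_right, ← ENNReal.tsum_mul_left]
        _ = ∑' j : Zd d, (‖commM a φ ε k j l r‖₊ : ℝ≥0∞)
              * (ENNReal.ofReal (φ (ε • (r : Ed d) - zc j)) * W r) := by
            refine tsum_congr fun j => ?_
            rw [hcomm j, sq, ENNReal.ofReal_mul (hφ0 _)]
            ring
    calc (‖Dl l‖₊ : ℝ≥0∞) ≤ ∑' r : Γ, (‖dm l r * c r‖₊ : ℝ≥0∞) := enorm_tsum_le' _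
      _ = ∑' r : Γ, ∑' j : Zd d, (‖commM a φ ε k j l r‖₊ : ℝ≥0∞)
            * (ENNReal.ofReal (φ (ε • (r : Ed d) - zc j)) * W r) := tsum_congr h2
      _ = _ := ENNReal.tsum_comm
  -- step 2 : p-th powers and Schur-type bound
  have hstep2 : (∑' l : Λ, (‖Dl l‖₊ : ℝ≥0∞) ^ p)
      ≤ ∑' j : Zd d, ∑' r : Γ,
          (∑' l : Λ, (‖commM a φ ε k j l r‖₊ : ℝ≥0∞) ^ p)
            * (ENNReal.ofReal (φ (ε • (r : Ed d) - zc j)) * W r) ^ p := by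
    calc (∑' l : Λ, (‖Dl l‖₊ : ℝ≥0∞) ^ p)
        ≤ ∑' l : Λ, (∑' j : Zd d, ∑' r : Γ, (‖commM a φ ε k j l r‖₊ : ℝ≥0∞)
            * (ENNReal.ofReal (φ (ε • (r : Ed d) - zc j)) * W r)) ^ p :=
          ENNReal.tsum_le_tsum fun l => ENNReal.rpow_le_rpow (hstep1 l) hp0.le
      _ ≤ ∑' l : Λ, ∑' j : Zd d, (∑' r : Γ, (‖commM a φ ε k j l r‖₊ : ℝ≥0∞)
            * (ENNReal.ofReal (φ (ε • (r : Ed d) - zc j)) * W r)) ^ p :=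
          ENNReal.tsum_le_tsum fun l => tsum_rpow_le _ hp0 hp1
      _ ≤ ∑' l : Λ, ∑' j : Zd d, ∑' r : Γ, ((‖commM a φ ε k j l r‖₊ : ℝ≥0∞)
            * (ENNReal.ofReal (φ (ε • (r : Ed d) - zc j)) * W r)) ^ p :=
          ENNReal.tsum_le_tsum fun l => ENNReal.tsum_le_tsum fun j => tsum_rpow_le _ hp0 hp1
      _ = ∑' j : Zd d, ∑' l : Λ, ∑' r : Γ, ((‖commM a φ ε k j l r‖₊ : ℝ≥0∞)
            * (ENNReal.ofReal (φ (ε • (r : Ed d) - zc j)) * W r)) ^ p := ENNReal.tsum_comm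
      _ = ∑' j : Zd d, ∑' r : Γ, ∑' l : Λ, ((‖commM a φ ε k j l r‖₊ : ℝ≥0∞)
            * (ENNReal.ofReal (φ (ε • (r : Ed d) - zc j)) * W r)) ^ p :=
          tsum_congr fun j => ENNReal.tsum_comm
      _ = ∑' j : Zd d, ∑' r : Γ,
            (∑' l : Λ, (‖commM a φ ε k j l r‖₊ : ℝ≥0∞) ^ p)
              * (ENNReal.ofReal (φ (ε • (r : Ed d) - zc j)) * W r) ^ p := by
          refine tsum_congr fun j => tsum_congr fun r => ?_
          rw [← ENNReal.tsum_mul_right]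
          exact tsum_congr fun l => ENNReal.mul_rpow_of_nonneg _ _ hp0.le
  -- step 3 : use the Schur norm and the bound on Phi^{-p}
  have hstep3 : ∀ (j : Zd d) (r : Γ),
      (∑' l : Λ, (‖commM a φ ε k j l r‖₊ : ℝ≥0∞) ^ p)
          * (ENNReal.ofReal (φ (ε • (r : Ed d) - zc j)) * W r) ^ p
        ≤ schurSP p (commM a φ ε k j)
            * (ENNReal.ofReal K * (‖phiAct φ ε j c r‖₊ : ℝ≥0∞) ^ p) := by
    intro j r
    refine mul_le_mul' (le_iSup (fun r' : Γ => ∑' l : Λ, (‖commM a φ ε k j l r'‖₊ : ℝ≥0∞) ^ p) r) ?_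
    have hPK : ((ENNReal.ofReal (Phi φ ε (r : Ed d)))⁻¹) ^ p ≤ ENNReal.ofReal K := by
      rw [← ENNReal.ofReal_inv_of_pos (hPpos _), ENNReal.ofReal_rpow_of_pos (inv_pos.mpr (hPpos _))]
      refine ENNReal.ofReal_le_ofReal ?_
      rw [Real.inv_rpow (hPpos _).le, ← Real.rpow_neg (hPpos _).le]
      exact hK _
    have hphi : (‖phiAct φ ε j c r‖₊ : ℝ≥0∞)
        = ENNReal.ofReal (φ (ε • (r : Ed d) - zc j)) * (‖c r‖₊ : ℝ≥0∞) := by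
      simp only [phiAct]
      rw [nnnorm_smul, ENNReal.coe_mul, ← enorm_eq_nnnorm (φ (ε • (r : Ed d) - zc j)), Real.enorm_eq_ofReal (hφ0 _)]
    calc (ENNReal.ofReal (φ (ε • (r : Ed d) - zc j)) * W r) ^ p
        = ((ENNReal.ofReal (φ (ε • (r : Ed d) - zc j)) * (‖c r‖₊ : ℝ≥0∞))
            * (ENNReal.ofReal (Phi φ ε (r : Ed d)))⁻¹) ^ p := by
          rw [hW]; ring_nf
      _ = (ENNReal.ofReal (φ (ε • (r : Ed d) - zc j)) * (‖c r‖₊ : ℝ≥0∞)) ^ p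
            * ((ENNReal.ofReal (Phi φ ε (r : Ed d)))⁻¹) ^ p :=
          ENNReal.mul_rpow_of_nonneg _ _ hp0.le
      _ ≤ (ENNReal.ofReal (φ (ε • (r : Ed d) - zc j)) * (‖c r‖₊ : ℝ≥0∞)) ^ p
            * ENNReal.ofReal K := mul_le_mul' le_rfl hPK
      _ = ENNReal.ofReal K * (‖phiAct φ ε j c r‖₊ : ℝ≥0∞) ^ p := by
          rw [hphi]; ring
  -- combine: bound for the commutator p-sum
  have hDbound : (∑' l : Λ, (‖Dl l‖₊ : ℝ≥0∞) ^ p)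
      ≤ ENNReal.ofReal K * ∑' j : Zd d, schurSP p (commM a φ ε k j)
          * ∑' r : Γ, (‖phiAct φ ε j c r‖₊ : ℝ≥0∞) ^ p := by
    calc (∑' l : Λ, (‖Dl l‖₊ : ℝ≥0∞) ^ p)
        ≤ ∑' j : Zd d, ∑' r : Γ,
            (∑' l : Λ, (‖commM a φ ε k j l r‖₊ : ℝ≥0∞) ^ p)
              * (ENNReal.ofReal (φ (ε • (r : Ed d) - zc j)) * W r) ^ p := hstep2
      _ ≤ ∑' j : Zd d, ∑' r : Γ, schurSP p (commM a φ ε k j)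
            * (ENNReal.ofReal K * (‖phiAct φ ε j c r‖₊ : ℝ≥0∞) ^ p) :=
          ENNReal.tsum_le_tsum fun j => ENNReal.tsum_le_tsum fun r => hstep3 j r
      _ = ENNReal.ofReal K * ∑' j : Zd d, schurSP p (commM a φ ε k j)
            * ∑' r : Γ, (‖phiAct φ ε j c r‖₊ : ℝ≥0∞) ^ p := by
          rw [← ENNReal.tsum_mul_left]
          refine tsum_congr fun j => ?_
          rw [ENNReal.tsum_mul_left, ENNReal.tsum_mul_left]
          ring
  -- final assembly
  calc elp p (phiAct φ ε k c) ^ q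
      = (∑' r : Γ, (‖phiAct φ ε k c r‖₊ : ℝ≥0∞) ^ p) ^ (q / p) := elp_pow _
    _ ≤ ((∑' l : Λ, (‖phiAct φ ε k (matMul a c) l‖₊ : ℝ≥0∞) ^ p)
          + ∑' l : Λ, (‖Dl l‖₊ : ℝ≥0∞) ^ p) ^ (q / p) :=
        ENNReal.rpow_le_rpow (hlowN.trans hsplit) hθ0.le
    _ ≤ (∑' l : Λ, (‖phiAct φ ε k (matMul a c) l‖₊ : ℝ≥0∞) ^ p) ^ (q / p)
          + (∑' l : Λ, (‖Dl l‖₊ : ℝ≥0∞) ^ p) ^ (q / p) :=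
        ENNReal.rpow_add_le_add_rpow _ _ hθ0.le hθ1
    _ ≤ elp p (phiAct φ ε k (matMul a c)) ^ q
          + ENNReal.ofReal K ^ (q / p)
            * ∑' j : Zd d, schurSP p (commM a φ ε k j) ^ (q / p) * elp p (phiAct φ ε j c) ^ q := by
        refine add_le_add (le_of_eq (elp_pow _).symm) ?_
        calc (∑' l : Λ, (‖Dl l‖₊ : ℝ≥0∞) ^ p) ^ (q / p)
            ≤ (ENNReal.ofReal K * ∑' j : Zd d, schurSP p (commM a φ ε k j)
                * ∑' r : Γ, (‖phiAct φ ε j c r‖₊ : ℝ≥0∞) ^ p) ^ (q / p) :=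
              ENNReal.rpow_le_rpow hDbound hθ0.le
          _ = ENNReal.ofReal K ^ (q / p) * (∑' j : Zd d, schurSP p (commM a φ ε k j)
                * ∑' r : Γ, (‖phiAct φ ε j c r‖₊ : ℝ≥0∞) ^ p) ^ (q / p) :=
              ENNReal.mul_rpow_of_nonneg _ _ hθ0.le
          _ ≤ ENNReal.ofReal K ^ (q / p) * ∑' j : Zd d, (schurSP p (commM a φ ε k j)
                * ∑' r : Γ, (‖phiAct φ ε j c r‖₊ : ℝ≥0∞) ^ p) ^ (q / p) :=
              mul_le_mul' le_rfl (tsum_rpow_le _ hθ0 hθ1)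
          _ = ENNReal.ofReal K ^ (q / p)
                * ∑' j : Zd d, schurSP p (commM a φ ε k j) ^ (q / p)
                    * elp p (phiAct φ ε j c) ^ q := by
              refine congrArg _ (tsum_congr fun j => ?_)
              rw [ENNReal.mul_rpow_of_nonneg _ _ hθ0.le, elp_pow]

end
end

section
/- Let d ≥ 1, 0 < p0 ≤ 1, p ∈ [p0, ∞], let Λ, Π ⊆ ℝ^d be relatively separated, and let A ∈ C^{p0}(Λ, Π). Then, as ε → 0⁺: if p ≤ 1, then sup_{j,k∈ℤ^d} V^{ε,p}_{j,k} → 0; and if p > 1, then sup_{j,k∈ℤ^d} V^ε_{j,k} → 0. -/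
open scoped ENNReal NNReal
open MeasureTheory Metric

attribute [local instance] Classical.propDecidable

noncomputable section

section AuxLemmas

variable {d : ℕ}

lemma relSep_countable {Λ : Set (Ed d)} (h : RelSep Λ) : Λ.Countable := by
  obtain ⟨D, hDc, hDd⟩ := TopologicalSpace.exists_countable_dense (Ed d)
  have hsub : Λ ⊆ ⋃ q ∈ D, (Λ ∩ ball q 1) := by
    intro y hy
    obtain ⟨q, hq, hq2⟩ := hDd.exists_dist_lt y (by norm_num : (0:ℝ) < 1)
    exact Set.mem_biUnion hq ⟨hy, by simpa [mem_ball, dist_comm] using hq2⟩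
  exact ((hDc.biUnion fun q _ => (h.1 q).countable)).mono hsub

lemma count_ball {Λ : Set (Ed d)} (h : RelSep Λ) {N : ℕ}
    (hN : ∀ x, (Λ ∩ ball x 1).ncard ≤ N) (y : Ed d) :
    ∑' l : Λ, (if (l : Ed d) ∈ ball y 1 then (1:ℝ≥0∞) else 0) ≤ N := by
  classical
  set T : Set Λ := {l : Λ | (l : Ed d) ∈ ball y 1} with hT
  have hTeq : T = (fun l : Λ => (l : Ed d)) ⁻¹' (Λ ∩ ball y 1) := by
    ext l; simp [hT, l.2]
  have hfin : T.Finite := by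
    rw [hTeq]
    exact Set.Finite.preimage Subtype.coe_injective.injOn (h.1 y)
  have hcard : T.ncard ≤ N := by
    have himg : (fun l : Λ => (l : Ed d)) '' T = Λ ∩ ball y 1 := by
      ext z; constructor
      · rintro ⟨l, hl, rfl⟩; exact ⟨l.2, hl⟩
      · rintro ⟨hz1, hz2⟩; exact ⟨⟨z, hz1⟩, hz2, rfl⟩
    calc T.ncard = ((fun l : Λ => (l : Ed d)) '' T).ncard :=
          (Set.ncard_image_of_injective T Subtype.coe_injective).symm
      _ ≤ N := himg ▸ hN y
  have hzero : ∀ l : Λ, l ∉ hfin.toFinset →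
      (if (l : Ed d) ∈ ball y 1 then (1:ℝ≥0∞) else 0) = 0 := by
    intro l hl
    rw [Set.Finite.mem_toFinset] at hl
    simp only [hT, Set.mem_setOf_eq] at hl
    exact if_neg hl
  rw [tsum_eq_sum hzero]
  calc ∑ l ∈ hfin.toFinset, (if (l : Ed d) ∈ ball y 1 then (1:ℝ≥0∞) else 0)
      ≤ ∑ _l ∈ hfin.toFinset, (1:ℝ≥0∞) := by
        apply Finset.sum_le_sum; intro l _; split <;> simp
    _ = (hfin.toFinset.card : ℝ≥0∞) := by simp
    _ ≤ (N : ℝ≥0∞) := by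
        rw [← Set.ncard_eq_toFinset_card T hfin]
        exact_mod_cast hcard

lemma countA {Λ : Set (Ed d)} (h : RelSep Λ) {N : ℕ}
    (hN : ∀ x, (Λ ∩ ball x 1).ncard ≤ N) (w : Ed d) (x : Ed d) :
    ∑' l : Λ, (ball ((l : Ed d) - w) 1).indicator (fun _ => (1:ℝ≥0∞)) x ≤ N := by
  have heq : ∀ l : Λ, (ball ((l : Ed d) - w) 1).indicator (fun _ => (1:ℝ≥0∞)) x
      = (if (l : Ed d) ∈ ball (x + w) 1 then (1:ℝ≥0∞) else 0) := by
    intro l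
    rw [Set.indicator_apply]
    congr 1
    simp only [mem_ball, eq_iff_iff]
    have : dist x ((l : Ed d) - w) = dist (l : Ed d) (x + w) := by
      rw [dist_eq_norm, dist_eq_norm, ← norm_neg (x - ((l : Ed d) - w))]
      congr 1
      abel
    rw [this]
  rw [tsum_congr heq]
  exact count_ball h hN (x + w)

lemma countB {Γ : Set (Ed d)} (h : RelSep Γ) {N : ℕ}
    (hN : ∀ x, (Γ ∩ ball x 1).ncard ≤ N) (w : Ed d) (x : Ed d) :
    ∑' r : Γ, (ball (w - (r : Ed d)) 1).indicator (fun _ => (1:ℝ≥0∞)) x ≤ N := by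
  have heq : ∀ r : Γ, (ball (w - (r : Ed d)) 1).indicator (fun _ => (1:ℝ≥0∞)) x
      = (if (r : Ed d) ∈ ball (w - x) 1 then (1:ℝ≥0∞) else 0) := by
    intro r
    rw [Set.indicator_apply]
    congr 1
    simp only [mem_ball, eq_iff_iff]
    have : dist x (w - (r : Ed d)) = dist (r : Ed d) (w - x) := by
      rw [dist_eq_norm, dist_eq_norm]
      congr 1
      abel
    rw [this]
  rw [tsum_congr heq]
  exact count_ball h hN (w - x)

lemma L1 {ι : Type*} [Countable ι] (c : ι → Ed d) (u : ι → ℝ≥0∞) (g : Ed d → ℝ≥0∞)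
    (hg : AEMeasurable g (volume : Measure (Ed d))) (N : ℕ)
    (hcount : ∀ x : Ed d, ∑' i, (ball (c i) 1).indicator (fun _ => (1:ℝ≥0∞)) x ≤ N)
    (S : Set (Ed d)) (hS : MeasurableSet S) (hsub : ∀ i, ball (c i) 1 ⊆ S)
    (hu : ∀ i, ∀ x ∈ ball (c i) 1, u i ≤ g x) :
    ∑' i, u i ≤ (volume (ball (0:Ed d) 1))⁻¹ * N * ∫⁻ x in S, g x := by
  set v := volume (ball (0:Ed d) 1) with hv
  have hv0 : v ≠ 0 := (measure_ball_pos volume 0 one_pos).ne'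
  have hvt : v ≠ ⊤ := measure_ball_lt_top.ne
  have key : (∑' i, u i) * v ≤ N * ∫⁻ x in S, g x := by
    rw [← ENNReal.tsum_mul_right]
    have h1 : ∀ i, u i * v = ∫⁻ x in S, (ball (c i) 1).indicator (fun _ => u i) x := by
      intro i
      rw [lintegral_indicator_const measurableSet_ball (u i),
        Measure.restrict_apply measurableSet_ball,
        Set.inter_eq_self_of_subset_left (hsub i),
        Measure.addHaar_ball_center]
    calc ∑' i, u i * v = ∑' i, ∫⁻ x in S, (ball (c i) 1).indicator (fun _ => u i) x :=
          tsum_congr h1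
      _ ≤ ∑' i, ∫⁻ x in S, (ball (c i) 1).indicator (fun _ => (1:ℝ≥0∞)) x * g x := by
          apply ENNReal.tsum_le_tsum; intro i
          apply lintegral_mono; intro x
          by_cases hx : x ∈ ball (c i) 1
          · simp only [Set.indicator_of_mem hx, one_mul]
            exact hu i x hx
          · simp [Set.indicator_of_notMem hx]
      _ = ∫⁻ x in S, ∑' i, (ball (c i) 1).indicator (fun _ => (1:ℝ≥0∞)) x * g x := by
          rw [← lintegral_tsum]
          intro i
          exact ((measurable_const.indicator measurableSet_ball).aemeasurable.mul hg.restrict)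
      _ ≤ ∫⁻ x in S, (N : ℝ≥0∞) * g x := by
          apply lintegral_mono; intro x
          dsimp only
          rw [ENNReal.tsum_mul_right]
          exact mul_le_mul_left (hcount x) _
      _ = N * ∫⁻ x in S, g x := lintegral_const_mul' _ _ (by simp)
  have h2 : ∑' i, u i ≤ ((N : ℝ≥0∞) * ∫⁻ x in S, g x) / v :=
    (ENNReal.le_div_iff_mul_le (Or.inl hv0) (Or.inl hvt)).2 key
  calc ∑' i, u i ≤ ((N : ℝ≥0∞) * ∫⁻ x in S, g x) / v := h2
    _ = v⁻¹ * N * ∫⁻ x in S, g x := by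
        rw [ENNReal.div_eq_inv_mul]; ring

lemma amalg_pt_bound {H : Ed d → ℝ} {Mb : ℝ} (hMb : ∀ x, |H x| ≤ Mb)
    {p₀ q : ℝ} (h0 : 0 < p₀) (hpq : p₀ ≤ q) (hq1 : q ≤ 1)
    (y x : Ed d) (hxy : dist x y < 1) :
    ENNReal.ofReal (|H y| ^ q) ≤
      ENNReal.ofReal (max 1 Mb) * ENNReal.ofReal (amalg H x ^ p₀) := by
  have hq0 : 0 < q := lt_of_lt_of_le h0 hpq
  have hC0 : (0:ℝ) ≤ max 1 Mb := le_trans zero_le_one (le_max_left 1 Mb)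
  rw [← ENNReal.ofReal_mul hC0]
  apply ENNReal.ofReal_le_ofReal
  have hay : |H y| ≤ amalg H x := by
    have hmem : y ∈ closedBall x 1 := by
      rw [mem_closedBall, dist_comm]
      exact hxy.le
    exact le_ciSup (f := fun z : closedBall x 1 => |H (z : Ed d)|)
      ⟨Mb, by rintro t ⟨z, rfl⟩; exact hMb z⟩ (⟨y, hmem⟩ : closedBall x 1)
  have h0a : (0:ℝ) ≤ amalg H x := (abs_nonneg _).trans hay
  rcases eq_or_lt_of_le (abs_nonneg (H y)) with h | h
  · rw [← h, Real.zero_rpow hq0.ne']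
    positivity
  · have key : |H y| ^ q ≤ max 1 Mb * |H y| ^ p₀ := by
      have hsplit : |H y| ^ q = |H y| ^ p₀ * |H y| ^ (q - p₀) := by
        rw [← Real.rpow_add h]; ring_nf
      have h2 : |H y| ^ (q - p₀) ≤ max 1 Mb := by
        rcases le_or_gt (|H y|) 1 with h1 | h1
        · exact (Real.rpow_le_one (abs_nonneg _) h1 (by linarith)).trans (le_max_left _ _)
        · calc |H y| ^ (q - p₀) ≤ |H y| ^ (1:ℝ) :=
              Real.rpow_le_rpow_of_exponent_le h1.le (by linarith)
            _ = |H y| := Real.rpow_one _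
            _ ≤ Mb := hMb y
            _ ≤ max 1 Mb := le_max_right _ _
      calc |H y| ^ q = |H y| ^ (q - p₀) * |H y| ^ p₀ := by rw [hsplit]; ring
        _ ≤ max 1 Mb * |H y| ^ p₀ := by
            apply mul_le_mul_of_nonneg_right h2
            positivity
    calc |H y| ^ q ≤ max 1 Mb * |H y| ^ p₀ := key
      _ ≤ max 1 Mb * amalg H x ^ p₀ := by
          apply mul_le_mul_of_nonneg_left _ hC0
          exact Real.rpow_le_rpow (abs_nonneg _) hay h0.le


lemma core_sum {H : Ed d → ℝ} {Mb : ℝ} (hMb : ∀ x, |H x| ≤ Mb)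
    {p₀ q : ℝ} (h0 : 0 < p₀) (hpq : p₀ ≤ q) (hq1 : q ≤ 1)
    (hInt : Integrable (fun x : Ed d => amalg H x ^ p₀))
    {ι : Type*} [Countable ι] (c : ι → Ed d) (N : ℕ)
    (hcount : ∀ x : Ed d, ∑' i, (ball (c i) 1).indicator (fun _ => (1:ℝ≥0∞)) x ≤ N)
    {A ε R : ℝ} (hε : 0 < ε) (hR : 1 ≤ R) (hA : 0 < A) :
    ∑' i, ENNReal.ofReal ((min 1 (A * ε * ‖c i‖) * |H (c i)|) ^ q)
      ≤ ENNReal.ofReal ((A * ε * R) ^ q) *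
          ((volume (ball (0:Ed d) 1))⁻¹ * N * ENNReal.ofReal (max 1 Mb) *
            ∫⁻ x, ENNReal.ofReal (amalg H x ^ p₀))
        + (volume (ball (0:Ed d) 1))⁻¹ * N * ENNReal.ofReal (max 1 Mb) *
            ∫⁻ x in {x : Ed d | R - 1 ≤ ‖x‖}, ENNReal.ofReal (amalg H x ^ p₀) := by
  have hq0 : 0 < q := lt_of_lt_of_le h0 hpq
  set g0 : Ed d → ℝ≥0∞ := fun x => ENNReal.ofReal (amalg H x ^ p₀) with hg0
  have hg0m : AEMeasurable g0 (volume : Measure (Ed d)) :=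
    ENNReal.measurable_ofReal.comp_aemeasurable hInt.aestronglyMeasurable.aemeasurable
  set C : ℝ≥0∞ := ENNReal.ofReal (max 1 Mb) with hCdef
  have hCne : C ≠ ⊤ := ENNReal.ofReal_ne_top
  set g : Ed d → ℝ≥0∞ := fun x => C * g0 x with hgdef
  have hgm : AEMeasurable g (volume : Measure (Ed d)) := aemeasurable_const.mul hg0m
  set v := volume (ball (0:Ed d) 1) with hv
  set P : Set ι := {i | ‖c i‖ < R} with hP
  -- pointwise bound used in both parts
  have hpt : ∀ (i : ι), ∀ x ∈ ball (c i) 1, ENNReal.ofReal (|H (c i)| ^ q) ≤ g x := by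
    intro i x hx
    exact amalg_pt_bound hMb h0 hpq hq1 (c i) x (mem_ball.1 hx)
  -- subtype count bounds
  have hcntP : ∀ x : Ed d,
      ∑' i : P, (ball (c (i : ι)) 1).indicator (fun _ => (1:ℝ≥0∞)) x ≤ N := fun x =>
    le_trans (ENNReal.tsum_comp_le_tsum_of_injective Subtype.coe_injective
      (fun i => (ball (c i) 1).indicator (fun _ => (1:ℝ≥0∞)) x)) (hcount x)
  have hcntPc : ∀ x : Ed d,
      ∑' i : (Pᶜ : Set ι), (ball (c (i : ι)) 1).indicator (fun _ => (1:ℝ≥0∞)) x ≤ N := fun x =>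
    le_trans (ENNReal.tsum_comp_le_tsum_of_injective Subtype.coe_injective
      (fun i => (ball (c i) 1).indicator (fun _ => (1:ℝ≥0∞)) x)) (hcount x)
  -- Part 1 : indices with ‖c i‖ < R
  have part1 : ∑' i : P, ENNReal.ofReal ((min 1 (A * ε * ‖c (i : ι)‖) * |H (c (i : ι))|) ^ q)
      ≤ ENNReal.ofReal ((A * ε * R) ^ q) * (v⁻¹ * N * ENNReal.ofReal (max 1 Mb) *
          ∫⁻ x, ENNReal.ofReal (amalg H x ^ p₀)) := by
    have step : ∀ i : P, ENNReal.ofReal ((min 1 (A * ε * ‖c (i : ι)‖) * |H (c (i : ι))|) ^ q)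
        ≤ ENNReal.ofReal ((A * ε * R) ^ q) * ENNReal.ofReal (|H (c (i : ι))| ^ q) := by
      intro i
      rw [← ENNReal.ofReal_mul (by positivity)]
      apply ENNReal.ofReal_le_ofReal
      rw [← Real.mul_rpow (by positivity) (abs_nonneg _)]
      apply Real.rpow_le_rpow _ _ hq0.le
      · have hmin : (0:ℝ) ≤ min 1 (A * ε * ‖c (i:ι)‖) := le_min zero_le_one (by positivity)
        positivity
      · apply mul_le_mul_of_nonneg_right _ (abs_nonneg _)
        calc min 1 (A * ε * ‖c (i:ι)‖) ≤ A * ε * ‖c (i:ι)‖ := min_le_right _ _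
          _ ≤ A * ε * R := by
              have hiR : ‖c (i:ι)‖ < R := i.2
              exact mul_le_mul_of_nonneg_left hiR.le (by positivity)
    calc ∑' i : P, ENNReal.ofReal ((min 1 (A * ε * ‖c (i : ι)‖) * |H (c (i : ι))|) ^ q)
        ≤ ∑' i : P, ENNReal.ofReal ((A * ε * R) ^ q) * ENNReal.ofReal (|H (c (i : ι))| ^ q) :=
          ENNReal.tsum_le_tsum step
      _ = ENNReal.ofReal ((A * ε * R) ^ q) * ∑' i : P, ENNReal.ofReal (|H (c (i : ι))| ^ q) :=
          ENNReal.tsum_mul_left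
      _ ≤ ENNReal.ofReal ((A * ε * R) ^ q) * (v⁻¹ * N * ∫⁻ x in (Set.univ : Set (Ed d)), g x) := by
          apply mul_le_mul_right
          exact L1 (fun i : P => c (i : ι)) _ g hgm N hcntP Set.univ MeasurableSet.univ
            (fun i => Set.subset_univ _) (fun i x hx => hpt (i : ι) x hx)
      _ = ENNReal.ofReal ((A * ε * R) ^ q) * (v⁻¹ * N * ENNReal.ofReal (max 1 Mb) *
            ∫⁻ x, ENNReal.ofReal (amalg H x ^ p₀)) := by
          rw [Measure.restrict_univ]
          rw [lintegral_const_mul' C g0 hCne]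
          ring
  -- Part 2 : indices with R ≤ ‖c i‖
  have part2 : ∑' i : (Pᶜ : Set ι),
        ENNReal.ofReal ((min 1 (A * ε * ‖c (i : ι)‖) * |H (c (i : ι))|) ^ q)
      ≤ v⁻¹ * N * ENNReal.ofReal (max 1 Mb) *
          ∫⁻ x in {x : Ed d | R - 1 ≤ ‖x‖}, ENNReal.ofReal (amalg H x ^ p₀) := by
    set S : Set (Ed d) := {x : Ed d | R - 1 ≤ ‖x‖} with hSdef
    have hSm : MeasurableSet S := (isClosed_le continuous_const continuous_norm).measurableSet
    have hsub : ∀ i : (Pᶜ : Set ι), ball (c (i : ι)) 1 ⊆ S := by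
      rintro ⟨i, hi⟩ x hx
      have hRi : R ≤ ‖c i‖ := not_lt.1 hi
      have h1 : |‖c i‖ - ‖x‖| ≤ ‖c i - x‖ := abs_norm_sub_norm_le _ _
      have h2 : ‖c i - x‖ < 1 := by
        rw [← dist_eq_norm, dist_comm]
        exact mem_ball.1 hx
      have := abs_le.1 h1
      simp only [hSdef, Set.mem_setOf_eq]
      linarith [this.1, this.2]
    have step : ∀ i : (Pᶜ : Set ι),
        ENNReal.ofReal ((min 1 (A * ε * ‖c (i : ι)‖) * |H (c (i : ι))|) ^ q)
        ≤ ENNReal.ofReal (|H (c (i : ι))| ^ q) := by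
      intro i
      apply ENNReal.ofReal_le_ofReal
      apply Real.rpow_le_rpow _ _ hq0.le
      · have hmin : (0:ℝ) ≤ min 1 (A * ε * ‖c (i:ι)‖) := le_min zero_le_one (by positivity)
        positivity
      · calc min 1 (A * ε * ‖c (i:ι)‖) * |H (c (i:ι))| ≤ 1 * |H (c (i:ι))| :=
            mul_le_mul_of_nonneg_right (min_le_left _ _) (abs_nonneg _)
          _ = |H (c (i:ι))| := one_mul _
    calc ∑' i : (Pᶜ : Set ι), ENNReal.ofReal ((min 1 (A * ε * ‖c (i : ι)‖) * |H (c (i : ι))|) ^ q)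
        ≤ ∑' i : (Pᶜ : Set ι), ENNReal.ofReal (|H (c (i : ι))| ^ q) := ENNReal.tsum_le_tsum step
      _ ≤ v⁻¹ * N * ∫⁻ x in S, g x :=
          L1 (fun i : (Pᶜ : Set ι) => c (i : ι)) _ g hgm N hcntPc S hSm hsub
            (fun i x hx => hpt (i : ι) x hx)
      _ = v⁻¹ * N * ENNReal.ofReal (max 1 Mb) *
            ∫⁻ x in {x : Ed d | R - 1 ≤ ‖x‖}, ENNReal.ofReal (amalg H x ^ p₀) := by
          rw [lintegral_const_mul' C g0 hCne]
          ring
  calc ∑' i, ENNReal.ofReal ((min 1 (A * ε * ‖c i‖) * |H (c i)|) ^ q)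
      = (∑' i : P, ENNReal.ofReal ((min 1 (A * ε * ‖c (i : ι)‖) * |H (c (i : ι))|) ^ q))
        + ∑' i : (Pᶜ : Set ι), ENNReal.ofReal ((min 1 (A * ε * ‖c (i : ι)‖) * |H (c (i : ι))|) ^ q) :=
        (Summable.tsum_add_tsum_compl ENNReal.summable ENNReal.summable).symm
    _ ≤ _ := add_le_add part1 part2

lemma tail_small (g0 : Ed d → ℝ≥0∞) (hg : AEMeasurable g0 (volume : Measure (Ed d)))
    (hfin : ∫⁻ x, g0 x ≠ ⊤) (K : ℝ≥0∞) (hK : K ≠ ⊤) :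
    ∀ η : ℝ≥0∞, 0 < η → ∃ R : ℝ, 1 ≤ R ∧
      K * ∫⁻ x in {x : Ed d | R - 1 ≤ ‖x‖}, g0 x ≤ η := by
  intro η hη
  rcases eq_or_ne K 0 with hK0 | hK0
  · exact ⟨1, le_rfl, by simp [hK0]⟩
  set g' := hg.mk g0 with hg'
  have hmeas : Measurable g' := hg.measurable_mk
  have hae : g0 =ᵐ[(volume : Measure (Ed d))] g' := hg.ae_eq_mk
  have heq : ∀ S : Set (Ed d), ∫⁻ x in S, g0 x = ∫⁻ x in S, g' x := fun S =>
    lintegral_congr_ae (ae_restrict_of_ae hae)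
  set ν := (volume : Measure (Ed d)).withDensity g' with hν
  have hνa : ∀ (S : Set (Ed d)), MeasurableSet S → ν S = ∫⁻ x in S, g' x := fun S hS =>
    withDensity_apply g' hS
  have htot : ∫⁻ x, g' x ≠ ⊤ := by
    rw [lintegral_congr_ae hae.symm]; exact hfin
  have hAm : ∀ n : ℕ, MeasurableSet {x : Ed d | (n:ℝ) ≤ ‖x‖} := fun n =>
    (isClosed_le continuous_const continuous_norm).measurableSet
  have hanti : Antitone (fun n : ℕ => {x : Ed d | (n:ℝ) ≤ ‖x‖}) := by
    intro m n hmn x hx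
    simp only [Set.mem_setOf_eq] at hx ⊢
    exact le_trans (Nat.cast_le.2 hmn) hx
  have hint : ⋂ n : ℕ, {x : Ed d | (n:ℝ) ≤ ‖x‖} = ∅ := by
    ext x
    simp only [Set.mem_iInter, Set.mem_empty_iff_false, iff_false, not_forall,
      Set.mem_setOf_eq, not_le]
    obtain ⟨n, hn⟩ := exists_nat_gt ‖x‖
    exact ⟨n, hn⟩
  have htend := tendsto_measure_iInter_atTop (μ := ν)
    (fun n => (hAm n).nullMeasurableSet) hanti
    ⟨0, by
      rw [hνa _ (hAm 0)]
      exact ne_top_of_le_ne_top htot (setLIntegral_le_lintegral _ _)⟩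
  rw [hint, measure_empty] at htend
  have hδ : 0 < η / K := ENNReal.div_pos hη.ne' hK
  obtain ⟨n, hn⟩ := ((ENNReal.tendsto_nhds_zero.1 htend) (η / K) hδ).exists
  refine ⟨(n : ℝ) + 1, by linarith [Nat.cast_nonneg (α := ℝ) n], ?_⟩
  have hsetEq : {x : Ed d | (n:ℝ) + 1 - 1 ≤ ‖x‖} = {x : Ed d | (n:ℝ) ≤ ‖x‖} := by
    norm_num
  rw [hsetEq, heq, ← hνa _ (hAm n)]
  calc K * ν {x : Ed d | (n:ℝ) ≤ ‖x‖} ≤ K * (η / K) := by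
        apply mul_le_mul_right
        exact hn
    _ ≤ η := ENNReal.mul_div_le

lemma tendsto_aux (F : ℝ → ℝ≥0∞) (Kc : ℝ≥0∞) (hKc : Kc ≠ ⊤) (T : ℝ → ℝ≥0∞)
    (q A : ℝ) (hq : 0 < q) (hA : 0 < A)
    (hT : ∀ η : ℝ≥0∞, 0 < η → ∃ R, 1 ≤ R ∧ T R ≤ η)
    (hF : ∀ ε : ℝ, 0 < ε → ∀ R : ℝ, 1 ≤ R →
      F ε ≤ ENNReal.ofReal ((A * ε * R) ^ q) * Kc + T R) :
    Filter.Tendsto F (nhdsWithin 0 (Set.Ioi 0)) (nhds 0) := by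
  rw [ENNReal.tendsto_nhds_zero]
  intro η hη
  obtain ⟨R, hR1, hRT⟩ := hT (η / 2) (ENNReal.half_pos hη.ne')
  have hmain : Filter.Tendsto (fun ε : ℝ => ENNReal.ofReal ((A * ε * R) ^ q) * Kc)
      (nhdsWithin 0 (Set.Ioi 0)) (nhds 0) := by
    have h1 : Filter.Tendsto (fun ε : ℝ => (A * ε * R) ^ q)
        (nhdsWithin 0 (Set.Ioi 0)) (nhds 0) := by
      have hc : ContinuousAt (fun x : ℝ => x ^ q) 0 :=
        Real.continuousAt_rpow_const 0 q (Or.inr hq.le)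
      have h2 : Filter.Tendsto (fun ε : ℝ => A * ε * R) (nhdsWithin 0 (Set.Ioi 0)) (nhds 0) := by
        have h3 : Continuous (fun ε : ℝ => A * ε * R) := by continuity
        have h4 := h3.tendsto 0
        simp only [mul_zero, zero_mul] at h4
        exact h4.mono_left nhdsWithin_le_nhds
      have h4 := hc.tendsto.comp h2
      simpa [Function.comp_def, Real.zero_rpow hq.ne'] using h4
    have h3 := (ENNReal.continuous_ofReal.tendsto 0).comp h1
    simp only [ENNReal.ofReal_zero] at h3
    have h5 := ENNReal.Tendsto.mul_const h3 (Or.inr hKc)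
    simpa using h5
  have hev := (ENNReal.tendsto_nhds_zero.1 hmain) (η / 2) (ENNReal.half_pos hη.ne')
  filter_upwards [hev, self_mem_nhdsWithin] with ε h1 h2
  calc F ε ≤ ENNReal.ofReal ((A * ε * R) ^ q) * Kc + T R := hF ε h2 R hR1
    _ ≤ η / 2 + η / 2 := add_le_add h1 hRT
    _ = η := ENNReal.add_halves η


end AuxLemmas

section MainAux
variable {d : ℕ}

lemma entry_bound {Λ Γ : Set (Ed d)} (a : Λ → Γ → ℂ) {φ : Ed d → ℝ}
    (hφ0 : ∀ x, 0 ≤ φ x) (hφ1 : ∀ x, φ x ≤ 1) {Lc : ℝ≥0} (hLip : LipschitzWith Lc φ)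
    {H : Ed d → ℝ} (henv : ∀ (l : Λ) (r : Γ), ‖a l r‖ ≤ H ((l : Ed d) - (r : Ed d)))
    {ε : ℝ} (hε : 0 < ε) (k j : Zd d) (l : Λ) (r : Γ) :
    ‖commM a φ ε k j l r‖ ≤
      min 1 (((Lc : ℝ) + 1) * ε * ‖(l : Ed d) - (r : Ed d)‖) * |H ((l : Ed d) - (r : Ed d))| := by
  have hnorm : ‖commM a φ ε k j l r‖ = ‖a l r‖ *
      |φ (ε • (r : Ed d) - zc k) - φ (ε • (l : Ed d) - zc k)| * |φ (ε • (r : Ed d) - zc j)| := by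
    simp [commM, norm_mul, ← Complex.ofReal_sub, Complex.norm_real, Real.norm_eq_abs]
  have hd : |φ (ε • (r : Ed d) - zc k) - φ (ε • (l : Ed d) - zc k)|
      ≤ min 1 (((Lc : ℝ) + 1) * ε * ‖(l : Ed d) - (r : Ed d)‖) := by
    apply le_min
    · have h1 := hφ0 (ε • (r : Ed d) - zc k)
      have h2 := hφ1 (ε • (r : Ed d) - zc k)
      have h3 := hφ0 (ε • (l : Ed d) - zc k)
      have h4 := hφ1 (ε • (l : Ed d) - zc k)
      rw [abs_le]; constructor <;> linarith
    · have hl1 := hLip.dist_le_mul (ε • (r : Ed d) - zc k) (ε • (l : Ed d) - zc k)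
      rw [Real.dist_eq] at hl1
      have hdd : dist (ε • (r : Ed d) - zc k) (ε • (l : Ed d) - zc k)
          = ε * ‖(l : Ed d) - (r : Ed d)‖ := by
        rw [dist_eq_norm]
        have heq2 : (ε • (r : Ed d) - zc k) - (ε • (l : Ed d) - zc k)
            = ε • ((r : Ed d) - (l : Ed d)) := by
          rw [smul_sub]; abel
        rw [heq2, norm_smul, Real.norm_eq_abs, abs_of_pos hε, norm_sub_rev]
      calc |φ (ε • (r : Ed d) - zc k) - φ (ε • (l : Ed d) - zc k)|
          ≤ (Lc : ℝ) * (ε * ‖(l : Ed d) - (r : Ed d)‖) := by rw [← hdd]; exact hl1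
        _ ≤ ((Lc : ℝ) + 1) * ε * ‖(l : Ed d) - (r : Ed d)‖ := by
            have h5 : (0:ℝ) ≤ ε * ‖(l : Ed d) - (r : Ed d)‖ := by positivity
            nlinarith [Lc.coe_nonneg, h5]
  have hj : |φ (ε • (r : Ed d) - zc j)| ≤ 1 := by
    rw [abs_le]; constructor
    · linarith [hφ0 (ε • (r : Ed d) - zc j)]
    · exact hφ1 _
  calc ‖commM a φ ε k j l r‖
      = ‖a l r‖ * |φ (ε • (r : Ed d) - zc k) - φ (ε • (l : Ed d) - zc k)|
        * |φ (ε • (r : Ed d) - zc j)| := hnorm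
    _ ≤ |H ((l : Ed d) - (r : Ed d))|
        * min 1 (((Lc : ℝ) + 1) * ε * ‖(l : Ed d) - (r : Ed d)‖) * 1 := by
        apply mul_le_mul
        · apply mul_le_mul
          · exact (henv l r).trans (le_abs_self _)
          · exact hd
          · exact abs_nonneg _
          · exact abs_nonneg _
        · exact hj
        · exact abs_nonneg _
        · exact mul_nonneg (abs_nonneg _) (le_min zero_le_one (by positivity))
    _ = min 1 (((Lc : ℝ) + 1) * ε * ‖(l : Ed d) - (r : Ed d)‖)
        * |H ((l : Ed d) - (r : Ed d))| := by ring

end MainAux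

theorem stmt12 (d : ℕ) (hd : 1 ≤ d)
    (p₀ : ℝ) (h00 : 0 < p₀) (h01 : p₀ ≤ 1) (p : ℝ≥0∞) (hp : ENNReal.ofReal p₀ ≤ p)
    (φ : Ed d → ℝ)
    (hφsm : ContDiff ℝ (⊤ : ℕ∞) φ) (hφ0 : ∀ x, 0 ≤ φ x) (hφ1 : ∀ x, φ x ≤ 1)
    (hφsupp : ∀ x : Ed d, 2 ≤ ‖x‖ → φ x = 0)
    (hφpart : ∀ x : Ed d, HasSum (fun k : Zd d => φ (x - zc k)) 1)
    (Λ Γ : Set (Ed d)) (hΛ : RelSep Λ) (hΓ : RelSep Γ)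
    (a : Λ → Γ → ℂ) (H : Ed d → ℝ) (hH : MemWiener p₀ H)
    (henv : ∀ (l : Λ) (r : Γ), ‖a l r‖ ≤ H ((l : Ed d) - (r : Ed d))) :
    (p ≤ 1 → Filter.Tendsto
        (fun ε : ℝ => ⨆ j : Zd d, ⨆ k : Zd d, schurSP p.toReal (commM a φ ε k j))
        (nhdsWithin 0 (Set.Ioi 0)) (nhds 0)) ∧
    (1 < p → Filter.Tendsto
        (fun ε : ℝ => ⨆ j : Zd d, ⨆ k : Zd d, schurE (commM a φ ε k j))
        (nhdsWithin 0 (Set.Ioi 0)) (nhds 0)) := by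
  obtain ⟨NL, hNL⟩ := hΛ.2
  obtain ⟨NG, hNG⟩ := hΓ.2
  haveI : Countable Λ := (relSep_countable hΛ).to_subtype
  haveI : Countable Γ := (relSep_countable hΓ).to_subtype
  obtain ⟨Mb, hMb⟩ := hH.2.1
  have hInt := hH.2.2
  have hcs : HasCompactSupport φ := by
    apply HasCompactSupport.intro (isCompact_closedBall (0 : Ed d) 2)
    intro x hx
    apply hφsupp
    simp only [mem_closedBall, dist_zero_right, not_le] at hx
    exact hx.le
  obtain ⟨Lc, hLip⟩ := ContDiff.lipschitzWith_of_hasCompactSupport hcs hφsm (by simp)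
  have hA0 : (0:ℝ) < (Lc : ℝ) + 1 := by positivity
  set g0 : Ed d → ℝ≥0∞ := fun x => ENNReal.ofReal (amalg H x ^ p₀) with hg0def
  have hg0m : AEMeasurable g0 (volume : Measure (Ed d)) :=
    ENNReal.measurable_ofReal.comp_aemeasurable hInt.aestronglyMeasurable.aemeasurable
  have hg0fin : ∫⁻ x, g0 x ≠ ⊤ := by
    have h1 : ∫⁻ x, g0 x ≤ ∫⁻ x, (‖amalg H x ^ p₀‖₊ : ℝ≥0∞) := by
      apply lintegral_mono; intro x
      dsimp only
      rw [← enorm_eq_nnnorm, Real.enorm_eq_ofReal_abs]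
      exact ENNReal.ofReal_le_ofReal (le_abs_self _)
    exact (lt_of_le_of_lt h1 hInt.hasFiniteIntegral).ne
  set v : ℝ≥0∞ := volume (ball (0:Ed d) 1) with hvdef
  have hvinv : v⁻¹ ≠ ⊤ := by
    simp only [ne_eq, ENNReal.inv_eq_top]
    exact (measure_ball_pos volume (0:Ed d) one_pos).ne'
  set KL : ℝ≥0∞ := v⁻¹ * NL * ENNReal.ofReal (max 1 Mb) with hKLdef
  set KG : ℝ≥0∞ := v⁻¹ * NG * ENNReal.ofReal (max 1 Mb) with hKGdef
  have hKLne : KL ≠ ⊤ :=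
    ENNReal.mul_ne_top (ENNReal.mul_ne_top hvinv (ENNReal.natCast_ne_top _)) ENNReal.ofReal_ne_top
  have hKGne : KG ≠ ⊤ :=
    ENNReal.mul_ne_top (ENNReal.mul_ne_top hvinv (ENNReal.natCast_ne_top _)) ENNReal.ofReal_ne_top
  constructor
  · -- p ≤ 1 case
    intro hple
    have hptop : p ≠ ⊤ := (lt_of_le_of_lt hple (by norm_num)).ne
    have hq1 : p.toReal ≤ 1 := by
      calc p.toReal ≤ (1:ℝ≥0∞).toReal := ENNReal.toReal_mono (by norm_num) hple
        _ = 1 := by simp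
    have hpq : p₀ ≤ p.toReal := by
      have h2 := ENNReal.toReal_mono hptop hp
      rwa [ENNReal.toReal_ofReal h00.le] at h2
    have hq0 : 0 < p.toReal := lt_of_lt_of_le h00 hpq
    apply tendsto_aux _ (KL * ∫⁻ x, g0 x) (ENNReal.mul_ne_top hKLne hg0fin)
      (fun R => KL * ∫⁻ x in {x : Ed d | R - 1 ≤ ‖x‖}, g0 x) p.toReal ((Lc : ℝ) + 1) hq0 hA0
    · exact tail_small g0 hg0m hg0fin KL hKLne
    · intro ε hε R hR
      refine iSup_le fun j => iSup_le fun k => ?_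
      simp only [schurSP]
      refine iSup_le fun r => ?_
      calc ∑' l : Λ, (‖commM a φ ε k j l r‖₊ : ℝ≥0∞) ^ p.toReal
          ≤ ∑' l : Λ, ENNReal.ofReal
              ((min 1 (((Lc : ℝ) + 1) * ε * ‖(l : Ed d) - (r : Ed d)‖)
                * |H ((l : Ed d) - (r : Ed d))|) ^ p.toReal) := by
            apply ENNReal.tsum_le_tsum
            intro l
            rw [← enorm_eq_nnnorm, ← ofReal_norm,
              ENNReal.ofReal_rpow_of_nonneg (norm_nonneg _) hq0.le]
            exact ENNReal.ofReal_le_ofReal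
              (Real.rpow_le_rpow (norm_nonneg _)
                (entry_bound a hφ0 hφ1 hLip henv hε k j l r) hq0.le)
        _ ≤ ENNReal.ofReal ((((Lc : ℝ) + 1) * ε * R) ^ p.toReal) * (KL * ∫⁻ x, g0 x)
            + KL * ∫⁻ x in {x : Ed d | R - 1 ≤ ‖x‖}, g0 x := by
            have hcs2 := core_sum hMb h00 hpq hq1 hInt
              (fun l : Λ => (l : Ed d) - (r : Ed d)) NL
              (fun x => countA hΛ hNL (r : Ed d) x) hε hR hA0
            simp only [hKLdef, hvdef, hg0def]
            calc ∑' l : Λ, ENNReal.ofReal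
                    ((min 1 (((Lc : ℝ) + 1) * ε * ‖(l : Ed d) - (r : Ed d)‖)
                      * |H ((l : Ed d) - (r : Ed d))|) ^ p.toReal)
                ≤ _ := hcs2
              _ = _ := by rw [mul_assoc, mul_assoc]
  · -- 1 < p case
    intro hp1
    have h1q : p₀ ≤ (1:ℝ) := h01
    apply tendsto_aux _ ((KL + KG) * ∫⁻ x, g0 x)
      (ENNReal.mul_ne_top (ENNReal.add_ne_top.2 ⟨hKLne, hKGne⟩) hg0fin)
      (fun R => (KL + KG) * ∫⁻ x in {x : Ed d | R - 1 ≤ ‖x‖}, g0 x) 1 ((Lc : ℝ) + 1)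
      one_pos hA0
    · exact tail_small g0 hg0m hg0fin (KL + KG) (ENNReal.add_ne_top.2 ⟨hKLne, hKGne⟩)
    · intro ε hε R hR
      refine iSup_le fun j => iSup_le fun k => ?_
      simp only [schurE]
      have hcol : (⨆ r : Γ, ∑' l : Λ, (‖commM a φ ε k j l r‖₊ : ℝ≥0∞))
          ≤ ENNReal.ofReal ((((Lc : ℝ) + 1) * ε * R) ^ (1:ℝ)) * (KL * ∫⁻ x, g0 x)
            + KL * ∫⁻ x in {x : Ed d | R - 1 ≤ ‖x‖}, g0 x := by
        refine iSup_le fun r => ?_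
        calc ∑' l : Λ, (‖commM a φ ε k j l r‖₊ : ℝ≥0∞)
            ≤ ∑' l : Λ, ENNReal.ofReal
                ((min 1 (((Lc : ℝ) + 1) * ε * ‖(l : Ed d) - (r : Ed d)‖)
                  * |H ((l : Ed d) - (r : Ed d))|) ^ (1:ℝ)) := by
              apply ENNReal.tsum_le_tsum
              intro l
              rw [Real.rpow_one, ← enorm_eq_nnnorm, ← ofReal_norm]
              exact ENNReal.ofReal_le_ofReal (entry_bound a hφ0 hφ1 hLip henv hε k j l r)
          _ ≤ ENNReal.ofReal ((((Lc : ℝ) + 1) * ε * R) ^ (1:ℝ)) * (KL * ∫⁻ x, g0 x)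
              + KL * ∫⁻ x in {x : Ed d | R - 1 ≤ ‖x‖}, g0 x := by
              have hcs2 := core_sum hMb h00 h1q le_rfl hInt
                (fun l : Λ => (l : Ed d) - (r : Ed d)) NL
                (fun x => countA hΛ hNL (r : Ed d) x) hε hR hA0
              simp only [hKLdef, hvdef, hg0def]
              calc ∑' l : Λ, ENNReal.ofReal
                      ((min 1 (((Lc : ℝ) + 1) * ε * ‖(l : Ed d) - (r : Ed d)‖)
                        * |H ((l : Ed d) - (r : Ed d))|) ^ (1:ℝ))
                  ≤ _ := hcs2
                _ = _ := by rw [mul_assoc, mul_assoc]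
      have hrow : (⨆ l : Λ, ∑' r : Γ, (‖commM a φ ε k j l r‖₊ : ℝ≥0∞))
          ≤ ENNReal.ofReal ((((Lc : ℝ) + 1) * ε * R) ^ (1:ℝ)) * (KG * ∫⁻ x, g0 x)
            + KG * ∫⁻ x in {x : Ed d | R - 1 ≤ ‖x‖}, g0 x := by
        refine iSup_le fun l => ?_
        calc ∑' r : Γ, (‖commM a φ ε k j l r‖₊ : ℝ≥0∞)
            ≤ ∑' r : Γ, ENNReal.ofReal
                ((min 1 (((Lc : ℝ) + 1) * ε * ‖(l : Ed d) - (r : Ed d)‖)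
                  * |H ((l : Ed d) - (r : Ed d))|) ^ (1:ℝ)) := by
              apply ENNReal.tsum_le_tsum
              intro r
              rw [Real.rpow_one, ← enorm_eq_nnnorm, ← ofReal_norm]
              exact ENNReal.ofReal_le_ofReal (entry_bound a hφ0 hφ1 hLip henv hε k j l r)
          _ ≤ ENNReal.ofReal ((((Lc : ℝ) + 1) * ε * R) ^ (1:ℝ)) * (KG * ∫⁻ x, g0 x)
              + KG * ∫⁻ x in {x : Ed d | R - 1 ≤ ‖x‖}, g0 x := by
              have hcs2 := core_sum hMb h00 h1q le_rfl hInt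
                (fun r : Γ => (l : Ed d) - (r : Ed d)) NG
                (fun x => countB hΓ hNG (l : Ed d) x) hε hR hA0
              simp only [hKGdef, hvdef, hg0def]
              calc ∑' r : Γ, ENNReal.ofReal
                      ((min 1 (((Lc : ℝ) + 1) * ε * ‖(l : Ed d) - (r : Ed d)‖)
                        * |H ((l : Ed d) - (r : Ed d))|) ^ (1:ℝ))
                  ≤ _ := hcs2
                _ = _ := by rw [mul_assoc, mul_assoc]
      calc (⨆ r : Γ, ∑' l : Λ, (‖commM a φ ε k j l r‖₊ : ℝ≥0∞))
            + (⨆ l : Λ, ∑' r : Γ, (‖commM a φ ε k j l r‖₊ : ℝ≥0∞))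
          ≤ (ENNReal.ofReal ((((Lc : ℝ) + 1) * ε * R) ^ (1:ℝ)) * (KL * ∫⁻ x, g0 x)
              + KL * ∫⁻ x in {x : Ed d | R - 1 ≤ ‖x‖}, g0 x)
            + (ENNReal.ofReal ((((Lc : ℝ) + 1) * ε * R) ^ (1:ℝ)) * (KG * ∫⁻ x, g0 x)
              + KG * ∫⁻ x in {x : Ed d | R - 1 ≤ ‖x‖}, g0 x) := add_le_add hcol hrow
        _ = ENNReal.ofReal ((((Lc : ℝ) + 1) * ε * R) ^ (1:ℝ)) * ((KL + KG) * ∫⁻ x, g0 x)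
            + (KL + KG) * ∫⁻ x in {x : Ed d | R - 1 ≤ ‖x‖}, g0 x := by ring



end
end

section
/- Let d ≥ 1, 0 < p0 ≤ q ≤ 1, and let H ∈ W(C_b, L^{p0}). Then ∑_{s∈ℤ^d, |s| > 6√d} Δ^{ε,q}(s) → 0 as ε → 0⁺. -/
/-
If `z` maximises `|H|` on the cube at `t`, then `amalg H ≥ |H z|` on the unit ball around `z`;
these balls overlap at most `4 ^ d` times, and `|H| ^ q ≤ M ^ (q - p₀) |H| ^ p₀` for a bound `M`
of `|H|`. Hence `∑ₜ sup_{cube t} |H| ^ q` is finite. For fixed `t`, at most `11 ^ d` points `s`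
satisfy `|ε t - s|_∞ ≤ 5`, and when `|s| > 6 √d` some `|s i| > 6` forces `|ε t i| ≥ 1`. So the sum
is at most `11 ^ d` times the part of a convergent series over `{t | ∃ i, 1 ≤ |ε t i|}`, which
tends to zero with `ε` since every fixed `t` eventually leaves that set.
-/

open scoped ENNReal NNReal
open MeasureTheory Metric

attribute [local instance] Classical.propDecidable

noncomputable section

open Filter Topology

section LatticeCounting

variable {d : ℕ}

theorem ENNReal.tsum_ite_le_card_mul {α : Type*} (T : Finset α) {P : α → Prop} [DecidablePred P]
    (hP : ∀ a, P a → a ∈ T) (c : ℝ≥0∞) :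
    ∑' a, (if P a then c else 0) ≤ T.card * c := by
  calc ∑' a, (if P a then c else 0) = ∑' _ : {a | P a}, c := by
        rw [tsum_subtype {a | P a} fun _ => c]
        simp only [Set.indicator_apply, Set.mem_ofPred_eq]
    _ = {a | P a}.encard * c := ENNReal.tsum_set_const _ c
    _ ≤ T.card * c := by
        gcongr
        calc ({a | P a}.encard : ℝ≥0∞) ≤ (T : Set α).encard := by gcongr; exact hP
          _ = T.card := by simp

theorem Int.card_Icc_ceil_floor_le (a : ℝ) (n : ℕ) : (Finset.Icc ⌈a⌉ ⌊a + n⌋).card ≤ n + 1 := by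
  rw [Int.card_Icc, Int.floor_add_natCast]
  have := Int.floor_le_ceil a
  omega

def latticeBox (a : Fin d → ℝ) (n : ℕ) : Finset (Zd d) :=
  Fintype.piFinset fun i => Finset.Icc ⌈a i⌉ ⌊a i + n⌋

theorem mem_latticeBox {a : Fin d → ℝ} {n : ℕ} {s : Zd d} :
    s ∈ latticeBox a n ↔ ∀ i, a i ≤ s i ∧ (s i : ℝ) ≤ a i + n := by
  simp only [latticeBox, Fintype.mem_piFinset, Finset.mem_Icc, Int.ceil_le, Int.le_floor]

theorem card_latticeBox_le (a : Fin d → ℝ) (n : ℕ) : (latticeBox a n).card ≤ (n + 1) ^ d := by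
  rw [latticeBox, Fintype.card_piFinset]
  calc ∏ i, (Finset.Icc ⌈a i⌉ ⌊a i + n⌋).card ≤ ∏ _i : Fin d, (n + 1) :=
        Finset.prod_le_prod' fun i _ => Int.card_Icc_ceil_floor_le (a i) n
    _ = (n + 1) ^ d := by simp

theorem tsum_ite_le_of_mem_box {P : Zd d → Prop} [DecidablePred P] (a : Fin d → ℝ) (n : ℕ)
    (hP : ∀ s, P s → ∀ i, a i ≤ s i ∧ (s i : ℝ) ≤ a i + n) (c : ℝ≥0∞) :
    ∑' s, (if P s then c else 0) ≤ (n + 1) ^ d * c :=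
  calc ∑' s, (if P s then c else 0) ≤ (latticeBox a n).card * c :=
        ENNReal.tsum_ite_le_card_mul _ (fun s hs => mem_latticeBox.2 (hP s hs)) c
    _ ≤ (n + 1) ^ d * c := by
        gcongr
        exact_mod_cast card_latticeBox_le a n

end LatticeCounting

theorem EuclideanSpace.exists_lt_abs_apply_of_mul_sqrt_lt_norm {d : ℕ} {r : ℝ} (hr : 0 ≤ r)
    {x : Ed d} (hx : r * √d < ‖x‖) : ∃ i, r < |x i| := by
  by_contra! h
  refine hx.not_ge ?_
  calc ‖x‖ = √(∑ i, ‖x i‖ ^ 2) := EuclideanSpace.norm_eq x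
    _ ≤ √(∑ _i : Fin d, r ^ 2) := by
        gcongr with i
        exact (Real.norm_eq_abs _).trans_le (h i)
    _ = r * √d := by
        rw [Finset.sum_const, Finset.card_univ, Fintype.card_fin, nsmul_eq_mul,
          Real.sqrt_mul (Nat.cast_nonneg _), Real.sqrt_sq hr, mul_comm]

theorem lintegral_tsum_indicator_le {X ι : Type*} [MeasurableSpace X] [Countable ι]
    {μ : Measure X} {B : ι → Set X} (hB : ∀ t, MeasurableSet (B t)) {N : ℝ≥0∞}
    (hN : ∀ x, ∑' t, (B t).indicator 1 x ≤ N) {g : X → ℝ≥0∞} (hg : AEMeasurable g μ) :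
    ∑' t, ∫⁻ x in B t, g x ∂μ ≤ N * ∫⁻ x, g x ∂μ := by
  have hmult : ∀ x, ∑' t, (B t).indicator g x ≤ N * g x := fun x =>
    calc ∑' t, (B t).indicator g x = (∑' t, (B t).indicator 1 x) * g x := by
          rw [← ENNReal.tsum_mul_right]
          congr 1 with t
          by_cases hx : x ∈ B t <;> simp [hx]
      _ ≤ N * g x := by gcongr; exact hN x
  calc ∑' t, ∫⁻ x in B t, g x ∂μ = ∑' t, ∫⁻ x, (B t).indicator g x ∂μ := by
        simp_rw [lintegral_indicator (hB _)]
    _ = ∫⁻ x, ∑' t, (B t).indicator g x ∂μ :=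
        (lintegral_tsum fun t => hg.indicator (hB t)).symm
    _ ≤ ∫⁻ x, N * g x ∂μ := lintegral_mono hmult
    _ = N * ∫⁻ x, g x ∂μ := lintegral_const_mul'' N hg

theorem ENNReal.tendsto_tsum_indicator_nhds_zero {α ι : Type*} {l : Filter α} {f : ι → ℝ≥0∞}
    (hf : ∑' i, f i ≠ ∞) {A : α → Set ι} (hA : ∀ i, ∀ᶠ a in l, i ∉ A a) :
    Tendsto (fun a => ∑' i, (A a).indicator f i) l (𝓝 0) := by
  rw [ENNReal.tendsto_nhds_zero]
  intro δ hδ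
  obtain ⟨F, hF⟩ := ((ENNReal.tendsto_tsum_compl_atTop_zero hf).eventually (ge_mem_nhds hδ)).exists
  filter_upwards [(eventually_all_finset F).2 fun i _ => hA i] with a ha
  calc ∑' i, (A a).indicator f i ≤ ∑' i, {i | i ∉ F}.indicator f i :=
        ENNReal.tsum_le_tsum fun i => Set.indicator_le_indicator_of_subset
          (fun i hi hiF => ha i hiF hi) (fun _ => zero_le) i
    _ = ∑' i : {i // i ∉ F}, f i := (tsum_subtype _ f).symm
    _ ≤ δ := hF

theorem Real.rpow_le_mul_rpow_of_le {a M p q : ℝ} (ha : 0 ≤ a) (haM : a ≤ M) (hp : 0 < p)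
    (hpq : p ≤ q) : a ^ q ≤ M ^ (q - p) * a ^ p :=
  calc a ^ q = a ^ (q - p) * a ^ p := by
        rw [← Real.rpow_add' ha (by linarith), sub_add_cancel]
    _ ≤ M ^ (q - p) * a ^ p := by gcongr

section WienerCubes

variable {d : ℕ}

def cube (t : Zd d) : Set (Ed d) := {z | ∀ i, (t i : ℝ) ≤ z i ∧ z i ≤ (t i : ℝ) + 1}

theorem isCompact_cube (t : Zd d) : IsCompact (cube t) := by
  have : cube t = WithLp.ofLp ⁻¹' Set.Icc (fun i => (t i : ℝ)) (fun i => (t i : ℝ) + 1) := by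
    ext z
    simp [cube, Pi.le_def, forall_and]
  rw [this]
  exact (PiLp.homeomorph 2 _).isCompact_preimage.2 isCompact_Icc

theorem zc_mem_cube (t : Zd d) : zc t ∈ cube t := fun i => by simp [zc]

theorem exists_cubeSup_le_rpow {H : Ed d → ℝ} (hH : Continuous H) {q : ℝ} (hq : 0 ≤ q)
    (t : Zd d) : ∃ z ∈ cube t, cubeSup H q t ≤ |H z| ^ q := by
  obtain ⟨z, hz, hmax⟩ :=
    (isCompact_cube t).exists_isMaxOn ⟨zc t, zc_mem_cube t⟩ hH.abs.continuousOn
  exact ⟨z, hz, Real.iSup_le (fun w => Real.rpow_le_rpow (abs_nonneg _) (hmax w.2) hq)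
    (by positivity)⟩

theorem abs_le_amalg {H : Ed d → ℝ} {M : ℝ} (hM : ∀ x, |H x| ≤ M) {x z : Ed d}
    (hz : dist z x ≤ 1) : |H z| ≤ amalg H x :=
  le_ciSup (f := fun y : closedBall x 1 => |H y|) ⟨M, by rintro _ ⟨y, rfl⟩; exact hM y⟩
    ⟨z, mem_closedBall.2 hz⟩

theorem tsum_indicator_closedBall_le {z : Zd d → Ed d} (hz : ∀ t, z t ∈ cube t) (x : Ed d) :
    ∑' t, (closedBall (z t) 1).indicator (1 : Ed d → ℝ≥0∞) x ≤ 4 ^ d := by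
  have hbox : ∀ t, x ∈ closedBall (z t) 1 →
      ∀ i, x i - 2 ≤ t i ∧ (t i : ℝ) ≤ x i - 2 + (3 : ℕ) := by
    intro t ht i
    have hxi := abs_le.1 ((Real.dist_eq _ _).symm.trans_le
      ((PiLp.dist_apply_le x (z t) i).trans (mem_closedBall.1 ht)))
    have := hz t i
    constructor <;> push_cast <;> linarith [hxi.1, hxi.2]
  simpa [Set.indicator_apply, show (3 : ℝ≥0∞) + 1 = 4 by norm_num] using
    tsum_ite_le_of_mem_box _ 3 hbox 1

theorem tsum_cubeSup_ne_top {H : Ed d → ℝ} {p q : ℝ} (hp : 0 < p) (hpq : p ≤ q)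
    (hH : MemWiener p H) : ∑' t, ENNReal.ofReal (cubeSup H q t) ≠ ∞ := by
  obtain ⟨hc, ⟨M, hM⟩, hint⟩ := hH
  choose z hz hz_sup using fun t => exists_cubeSup_le_rpow hc (hp.le.trans hpq) t
  set g : Ed d → ℝ≥0∞ := fun x => ENNReal.ofReal (amalg H x ^ p)
  set C : ℝ≥0∞ := ENNReal.ofReal (M ^ (q - p))
  have hM0 : 0 ≤ M := (abs_nonneg _).trans (hM 0)
  have hpt : ∀ t, ∀ x ∈ closedBall (z t) 1, ENNReal.ofReal (cubeSup H q t) ≤ C * g x := by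
    intro t x hx
    rw [← ENNReal.ofReal_mul (by positivity)]
    refine ENNReal.ofReal_le_ofReal ?_
    calc cubeSup H q t ≤ |H (z t)| ^ q := hz_sup t
      _ ≤ M ^ (q - p) * |H (z t)| ^ p :=
          Real.rpow_le_mul_rpow_of_le (abs_nonneg _) (hM _) hp hpq
      _ ≤ M ^ (q - p) * amalg H x ^ p := by
          gcongr
          exact abs_le_amalg hM (mem_closedBall'.1 hx)
  have key : (∑' t, ENNReal.ofReal (cubeSup H q t)) * volume (closedBall (0 : Ed d) 1)
      ≤ C * (4 ^ d * ∫⁻ x, g x) :=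
    calc _ = ∑' t, ∫⁻ _ in closedBall (z t) 1, ENNReal.ofReal (cubeSup H q t) := by
          rw [← ENNReal.tsum_mul_right]
          congr 1 with t
          rw [setLIntegral_const, Measure.addHaar_closedBall_center volume (z t)]
      _ ≤ ∑' t, ∫⁻ x in closedBall (z t) 1, C * g x :=
          ENNReal.tsum_le_tsum fun t => setLIntegral_mono' measurableSet_closedBall (hpt t)
      _ = C * ∑' t, ∫⁻ x in closedBall (z t) 1, g x := by
          simp_rw [lintegral_const_mul' C _ ENNReal.ofReal_ne_top, ENNReal.tsum_mul_left]
      _ ≤ C * (4 ^ d * ∫⁻ x, g x) := by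
          gcongr
          exact lintegral_tsum_indicator_le (fun _ => measurableSet_closedBall)
            (tsum_indicator_closedBall_le hz)
            (ENNReal.measurable_ofReal.comp_aemeasurable hint.aemeasurable)
  have hfin : C * (4 ^ d * ∫⁻ x, g x) ≠ ∞ :=
    ENNReal.mul_ne_top ENNReal.ofReal_ne_top
      (ENNReal.mul_ne_top (by simp) hint.lintegral_lt_top.ne)
  intro htop
  rw [htop, ENNReal.top_mul (measure_closedBall_pos _ _ one_pos).ne'] at key
  exact hfin (top_le_iff.1 key)

end WienerCubes

def scaledLarge {d : ℕ} (ε : ℝ) : Set (Zd d) := {t | ∃ i, 1 ≤ |ε * (t i : ℝ)|}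

theorem tsum_DeltaE_le {d : ℕ} (H : Ed d → ℝ) (ε q : ℝ) :
    ∑' s : {s : Zd d // 6 * Real.sqrt d < ‖zc s‖}, DeltaE H ε q (s : Zd d)
      ≤ 11 ^ d * ∑' t, (scaledLarge ε).indicator (fun t => ENNReal.ofReal (cubeSup H q t)) t := by
  simp only [DeltaE]
  rw [ENNReal.tsum_comm, ← ENNReal.tsum_mul_left]
  refine ENNReal.tsum_le_tsum fun t => ?_
  by_cases ht : t ∈ scaledLarge ε
  · rw [Set.indicator_of_mem ht]
    calc _ ≤ ∑' s : Zd d, if (∀ i, |ε * (t i : ℝ) - (s i : ℝ)| ≤ 5)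
            then ENNReal.ofReal (cubeSup H q t) else 0 :=
          ENNReal.tsum_comp_le_tsum_of_injective Subtype.val_injective _
      _ ≤ ((10 : ℕ) + 1) ^ d * ENNReal.ofReal (cubeSup H q t) := by
          refine tsum_ite_le_of_mem_box (fun i => ε * t i - 5) 10 (fun s hs i => ?_) _
          have := abs_le.1 (hs i)
          constructor <;> push_cast <;> linarith
      _ = 11 ^ d * ENNReal.ofReal (cubeSup H q t) := by norm_num
  · rw [Set.indicator_of_notMem ht, mul_zero, nonpos_iff_eq_zero, ENNReal.tsum_eq_zero]
    rintro ⟨s, hs⟩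
    obtain ⟨i, hsi⟩ : ∃ i, 6 < |(s i : ℝ)| :=
      EuclideanSpace.exists_lt_abs_apply_of_mul_sqrt_lt_norm (by norm_num) hs
    have hti : |ε * (t i : ℝ)| < 1 := not_le.1 (not_exists.1 ht i)
    refine if_neg fun hnear => ?_
    have := abs_sub_abs_le_abs_sub (s i : ℝ) (ε * t i)
    linarith [hnear i, abs_sub_comm (s i : ℝ) (ε * t i)]

theorem stmt13_general (d : ℕ) (p₀ q : ℝ) (h0 : 0 < p₀) (hq : p₀ ≤ q)
    (H : Ed d → ℝ) (hH : MemWiener p₀ H) :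
    Filter.Tendsto
      (fun ε : ℝ => ∑' s : {s : Zd d // 6 * Real.sqrt d < ‖zc s‖}, DeltaE H ε q (s : Zd d))
      (nhdsWithin 0 (Set.Ioi 0)) (nhds 0) := by
  have hsmall : ∀ t : Zd d, ∀ᶠ ε in 𝓝 (0 : ℝ), t ∉ scaledLarge ε := by
    intro t
    simp only [scaledLarge, Set.mem_ofPred_eq, not_exists, not_le]
    refine eventually_all.2 fun i => ?_
    have : Tendsto (fun ε : ℝ => |ε * (t i : ℝ)|) (𝓝 0) (𝓝 0) := by
      simpa using (continuous_id.mul continuous_const).abs.tendsto (0 : ℝ)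
    exact this.eventually (gt_mem_nhds one_pos)
  have hlim := ENNReal.Tendsto.const_mul
    (ENNReal.tendsto_tsum_indicator_nhds_zero (tsum_cubeSup_ne_top h0 hq hH) hsmall)
    (Or.inr (by simp : (11 : ℝ≥0∞) ^ d ≠ ∞))
  rw [mul_zero] at hlim
  exact tendsto_of_tendsto_of_tendsto_of_le_of_le tendsto_const_nhds
    (hlim.mono_left nhdsWithin_le_nhds) (fun _ => zero_le) (fun ε => tsum_DeltaE_le H ε q)

theorem stmt13 (d : ℕ) (hd : 1 ≤ d) (p₀ q : ℝ) (h0 : 0 < p₀) (hq : p₀ ≤ q) (hq1 : q ≤ 1)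
    (H : Ed d → ℝ) (hH : MemWiener p₀ H) :
    Filter.Tendsto
      (fun ε : ℝ => ∑' s : {s : Zd d // 6 * Real.sqrt d < ‖zc s‖}, DeltaE H ε q (s : Zd d))
      (nhdsWithin 0 (Set.Ioi 0)) (nhds 0) :=
  stmt13_general d p₀ q h0 hq H hH
end
end
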